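/- Let a > 0 and set q₁ = Φ(a), q₂ = Φ(a√2), q₃ = Φ(a√3). Define the quadratic D(τ) = (−9q₁ + 9q₂ − 3q₃)τ² + (6q₁ − 12q₂ + 6q₃)τ + (q₁ + 3q₂ − 3q₃). Then for every τ ∈ [0, 1/2], D(τ) ≥ (1−2τ)·D(0) + 2τ·D(1/2) (since the leading coefficient of D is negative, D is concave), and consequently D(τ) ≥ 0.5 − 0.94τ on [0, 1/2]. -/

import Mathlib

/-!
Write `D(τ) = Aτ² + Bτ + C`. Then `D(τ) − ((1 − 2τ)D(0) + 2τD(1/2)) = −A·τ(1/2 − τ)`, so the first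
claim is `A ≤ 0`, and the second follows from it together with `D(0) ≥ 1/2` and `D(1/2) ≥ 0.03`.

All three bounds come from `Φ(y) − Φ(x) = (2π)^{-1/2} ∫ₓʸ e^{−t²/2} dt` and the monotonicity of the
integrand on `[0, ∞)`: `9(q₂ − q₁) ≤ 9(√2 − 1)(2π)^{-1/2} a e^{−a²/2} ≤ 3/2 ≤ 3q₃` gives `A ≤ 0`, and
`q₁ − 1/2 ≥ (2π)^{-1/2} a e^{−a²/2} ≥ 3(q₃ − q₂)` gives `D(0) ≥ 1/2`. The bound on `D(1/2)` is tight
(its infimum over `a` is about `0.0304`): substituting `t ↦ t√j` gives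
`4D(1/2) = 1/2 − (2π)^{-1/2} ∫₀ᵃ H` for an explicit `H` that is negative beyond `0.64` and is
bounded on `[0, 0.64]` by a polynomial built from truncated exponential series.
-/

open MeasureTheory ProbabilityTheory Real

/-- The standard normal cumulative distribution function
`Φ(x) = (1/√(2π)) ∫_{-∞}^{x} e^{-t²/2} dt`. -/
noncomputable def stdGaussianCDF (x : ℝ) : ℝ :=
  (Real.sqrt (2 * Real.pi))⁻¹ * ∫ t in Set.Iic x, Real.exp (-t ^ 2 / 2)

/-- The quadratic `D(τ) = (−9q₁+9q₂−3q₃)τ² + (6q₁−12q₂+6q₃)τ + (q₁+3q₂−3q₃)`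
where `qⱼ = Φ(a√j)`. -/
noncomputable def quadD (a τ : ℝ) : ℝ :=
  (-9 * stdGaussianCDF a + 9 * stdGaussianCDF (a * Real.sqrt 2)
      - 3 * stdGaussianCDF (a * Real.sqrt 3)) * τ ^ 2
    + (6 * stdGaussianCDF a - 12 * stdGaussianCDF (a * Real.sqrt 2)
      + 6 * stdGaussianCDF (a * Real.sqrt 3)) * τ
    + (stdGaussianCDF a + 3 * stdGaussianCDF (a * Real.sqrt 2)
      - 3 * stdGaussianCDF (a * Real.sqrt 3))

open Set intervalIntegral

lemma integral_le_mul_of_antitoneOn {f : ℝ → ℝ} {x y : ℝ} (hxy : x ≤ y)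
    (hf : AntitoneOn f (Icc x y)) : ∫ t in x..y, f t ≤ (y - x) * f x := by
  have hint : IntervalIntegrable f volume x y := by
    apply AntitoneOn.intervalIntegrable; rwa [uIcc_of_le hxy]
  simpa using integral_mono_on hxy hint intervalIntegrable_const
    fun t ht ↦ hf ⟨le_rfl, hxy⟩ ht ht.1

lemma mul_le_integral_of_antitoneOn {f : ℝ → ℝ} {x y : ℝ} (hxy : x ≤ y)
    (hf : AntitoneOn f (Icc x y)) : (y - x) * f y ≤ ∫ t in x..y, f t := by
  have hint : IntervalIntegrable f volume x y := by
    apply AntitoneOn.intervalIntegrable; rwa [uIcc_of_le hxy]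
  simpa using integral_mono_on hxy intervalIntegrable_const hint
    fun t ht ↦ hf ht ⟨hxy, le_rfl⟩ ht.2

lemma exp_neg_le_of_le_one {y : ℝ} (h0 : 0 ≤ y) (h1 : y ≤ 1) :
    exp (-y) ≤ 1 - y + y ^ 2 / 2 - y ^ 3 / 6 + y ^ 4 / 24 := by
  have hb := (abs_le.1 (exp_bound (x := -y) (by rwa [abs_neg, abs_of_nonneg h0])
    (n := 6) (by norm_num))).2
  simp only [abs_neg, abs_of_nonneg h0, Finset.sum_range_succ, Finset.sum_range_zero,
    Nat.factorial] at hb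
  norm_num at hb
  nlinarith [pow_nonneg h0 5, pow_nonneg h0 6]

lemma le_exp_neg_of_le_one {y : ℝ} (h0 : 0 ≤ y) (h1 : y ≤ 1) :
    1 - y + y ^ 2 / 2 - y ^ 3 / 6 ≤ exp (-y) := by
  have hb := (abs_le.1 (exp_bound (x := -y) (by rwa [abs_neg, abs_of_nonneg h0])
    (n := 5) (by norm_num))).1
  simp only [abs_neg, abs_of_nonneg h0, Finset.sum_range_succ, Finset.sum_range_zero,
    Nat.factorial] at hb
  norm_num at hb
  nlinarith [pow_nonneg h0 4, pow_nonneg h0 5]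

lemma mul_exp_neg_sq_div_two_le_one (a : ℝ) : a * exp (-a ^ 2 / 2) ≤ 1 := by
  have hexp : 1 + a ^ 2 / 2 ≤ exp (a ^ 2 / 2) := by linarith [add_one_le_exp (a ^ 2 / 2)]
  rw [neg_div, exp_neg, mul_inv_le_iff₀ (exp_pos _)]
  nlinarith [sq_nonneg (a - 1)]

lemma chord_le_of_quadratic {f : ℝ → ℝ} {A B C : ℝ} (hf : ∀ τ, f τ = A * τ ^ 2 + B * τ + C)
    (hA : A ≤ 0) {τ : ℝ} (h0 : 0 ≤ τ) (h1 : τ ≤ 1 / 2) :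
    (1 - 2 * τ) * f 0 + 2 * τ * f (1 / 2) ≤ f τ := by
  simp only [hf]
  linarith [mul_nonneg (neg_nonneg.2 hA) (mul_nonneg h0 (sub_nonneg.2 h1))]

lemma sqrt_two_le_d7 : √2 ≤ 1.4142136 := (sqrt_le_left (by norm_num)).2 (by norm_num)

lemma sqrt_two_ge_d4 : 1.4142 ≤ √2 := (le_sqrt (by norm_num) (by norm_num)).2 (by norm_num)

lemma sqrt_three_le_d7 : √3 ≤ 1.7320509 := (sqrt_le_left (by norm_num)).2 (by norm_num)

lemma inv_sqrt_two_pi_le_d5 : (√(2 * π))⁻¹ ≤ 0.39895 := by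
  have : 2.5066 ≤ √(2 * π) := (le_sqrt (by norm_num) (by positivity)).2 (by nlinarith [pi_gt_d6])
  calc (√(2 * π))⁻¹ ≤ 2.5066⁻¹ := inv_anti₀ (by norm_num) this
    _ ≤ 0.39895 := by norm_num

lemma antitoneOn_exp_neg_sq_div_two : AntitoneOn (fun t : ℝ ↦ exp (-t ^ 2 / 2)) (Ici 0) := by
  intro x hx y _ hxy
  simp only [exp_le_exp]
  have : x ^ 2 ≤ y ^ 2 := pow_le_pow_left₀ hx hxy 2
  linarith

lemma integrable_exp_neg_sq_div_two : Integrable fun t : ℝ ↦ exp (-t ^ 2 / 2) := by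
  convert integrable_exp_neg_mul_sq (b := 1 / 2) (by norm_num) using 3
  ring

lemma stdGaussianCDF_sub (x y : ℝ) :
    stdGaussianCDF y - stdGaussianCDF x = (√(2 * π))⁻¹ * ∫ t in x..y, exp (-t ^ 2 / 2) := by
  rw [stdGaussianCDF, stdGaussianCDF, ← mul_sub, integral_Iic_sub_Iic
    integrable_exp_neg_sq_div_two.integrableOn integrable_exp_neg_sq_div_two.integrableOn]

lemma stdGaussianCDF_zero : stdGaussianCDF 0 = 1 / 2 := by
  have hsymm : ∫ t in Iic (0 : ℝ), exp (-t ^ 2 / 2) = ∫ t in Ioi (0 : ℝ), exp (-t ^ 2 / 2) := by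
    have h := integral_comp_neg_Iic (0 : ℝ) fun t : ℝ ↦ exp (-t ^ 2 / 2)
    simp only [neg_sq, neg_zero] at h
    exact h
  have hhalf : ∫ t in Ioi (0 : ℝ), exp (-t ^ 2 / 2) = √(2 * π) / 2 := by
    convert integral_gaussian_Ioi (1 / 2) using 3 <;> ring_nf
  have : 0 < √(2 * π) := by positivity
  rw [stdGaussianCDF, hsymm, hhalf]
  field_simp

lemma stdGaussianCDF_sub_le {x y : ℝ} (hx : 0 ≤ x) (hxy : x ≤ y) :
    stdGaussianCDF y - stdGaussianCDF x ≤ (√(2 * π))⁻¹ * ((y - x) * exp (-x ^ 2 / 2)) := by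
  rw [stdGaussianCDF_sub]
  gcongr
  exact integral_le_mul_of_antitoneOn hxy
    (antitoneOn_exp_neg_sq_div_two.mono fun t ht ↦ hx.trans ht.1)

lemma le_stdGaussianCDF_sub {x y : ℝ} (hx : 0 ≤ x) (hxy : x ≤ y) :
    (√(2 * π))⁻¹ * ((y - x) * exp (-y ^ 2 / 2)) ≤ stdGaussianCDF y - stdGaussianCDF x := by
  rw [stdGaussianCDF_sub]
  gcongr
  exact mul_le_integral_of_antitoneOn hxy
    (antitoneOn_exp_neg_sq_div_two.mono fun t ht ↦ hx.trans ht.1)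

lemma half_le_stdGaussianCDF {x : ℝ} (hx : 0 ≤ x) : 1 / 2 ≤ stdGaussianCDF x := by
  have h := le_stdGaussianCDF_sub le_rfl hx
  rw [stdGaussianCDF_zero, sub_zero] at h
  have : 0 ≤ (√(2 * π))⁻¹ * (x * exp (-x ^ 2 / 2)) := by positivity
  linarith

lemma stdGaussianCDF_mul_sqrt (a : ℝ) {c : ℝ} (hc : 0 < c) :
    stdGaussianCDF (a * √c)
      = 1 / 2 + (√(2 * π))⁻¹ * (√c * ∫ t in (0 : ℝ)..a, exp (-(c * t ^ 2) / 2)) := by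
  have hs : 0 < √c := sqrt_pos.2 hc
  have hcomp := integral_comp_mul_left (fun t ↦ exp (-t ^ 2 / 2)) hs.ne' (a := 0) (b := a)
  simp only [mul_pow, sq_sqrt hc.le, mul_zero, smul_eq_mul] at hcomp
  rw [hcomp, mul_inv_cancel_left₀ hs.ne', mul_comm a, ← stdGaussianCDF_sub, stdGaussianCDF_zero]
  ring

lemma quadD_leadingCoeff_nonpos {a : ℝ} (ha : 0 ≤ a) :
    -9 * stdGaussianCDF a + 9 * stdGaussianCDF (a * √2) - 3 * stdGaussianCDF (a * √3) ≤ 0 := by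
  have hq₃ := half_le_stdGaussianCDF (by positivity : 0 ≤ a * √3)
  have hq₂₁ : stdGaussianCDF (a * √2) - stdGaussianCDF a ≤ 1 / 6 := by
    have h1 : 1 ≤ √2 := by linarith [sqrt_two_ge_d4]
    calc stdGaussianCDF (a * √2) - stdGaussianCDF a
        ≤ (√(2 * π))⁻¹ * ((a * √2 - a) * exp (-a ^ 2 / 2)) :=
          stdGaussianCDF_sub_le ha (le_mul_of_one_le_right ha h1)
      _ = (√(2 * π))⁻¹ * (√2 - 1) * (a * exp (-a ^ 2 / 2)) := by ring
      _ ≤ 0.39895 * (1.4142136 - 1) * 1 := by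
          gcongr
          · exact inv_sqrt_two_pi_le_d5
          · exact sqrt_two_le_d7
          · exact mul_exp_neg_sq_div_two_le_one a
      _ ≤ 1 / 6 := by norm_num
  linarith

lemma half_le_quadD_zero {a : ℝ} (ha : 0 ≤ a) : 1 / 2 ≤ quadD a 0 := by
  have ha₂ : a ≤ a * √2 := le_mul_of_one_le_right ha (by linarith [sqrt_two_ge_d4])
  have hq₁ := le_stdGaussianCDF_sub le_rfl ha
  have hq₃₂ := stdGaussianCDF_sub_le (ha.trans ha₂)
    (mul_le_mul_of_nonneg_left (sqrt_le_sqrt (by norm_num : (2 : ℝ) ≤ 3)) ha)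
  have hwidth : a * √3 - a * √2 ≤ a / 3 := by
    nlinarith [mul_le_mul_of_nonneg_left (by linarith [sqrt_three_le_d7, sqrt_two_ge_d4] :
      √3 - √2 ≤ 1 / 3) ha]
  have hstep : (a * √3 - a * √2) * exp (-(a * √2) ^ 2 / 2) ≤ a * exp (-a ^ 2 / 2) / 3 :=
    calc (a * √3 - a * √2) * exp (-(a * √2) ^ 2 / 2) ≤ a / 3 * exp (-(a * √2) ^ 2 / 2) :=
          mul_le_mul_of_nonneg_right hwidth (exp_pos _).le
      _ ≤ a / 3 * exp (-a ^ 2 / 2) := by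
          gcongr
      _ = a * exp (-a ^ 2 / 2) / 3 := by ring
  have hK : 0 ≤ (√(2 * π))⁻¹ := by positivity
  have := mul_le_mul_of_nonneg_left hstep hK
  rw [stdGaussianCDF_zero, sub_zero] at hq₁
  simp only [quadD]
  linarith

noncomputable def quadDHalfIntegrand (t : ℝ) : ℝ :=
  3 * √2 * exp (-(2 * t ^ 2) / 2) + 3 * √3 * exp (-(3 * t ^ 2) / 2) - 7 * exp (-t ^ 2 / 2)

lemma continuous_quadDHalfIntegrand : Continuous quadDHalfIntegrand := by
  unfold quadDHalfIntegrand; fun_prop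

lemma quadD_half_eq (a : ℝ) :
    4 * quadD a (1 / 2) = 1 / 2 - (√(2 * π))⁻¹ * ∫ t in (0 : ℝ)..a, quadDHalfIntegrand t := by
  have hq₁ := stdGaussianCDF_sub 0 a
  rw [stdGaussianCDF_zero] at hq₁
  have hint : ∫ t in (0 : ℝ)..a, quadDHalfIntegrand t
      = 3 * √2 * (∫ t in (0 : ℝ)..a, exp (-(2 * t ^ 2) / 2))
        + 3 * √3 * (∫ t in (0 : ℝ)..a, exp (-(3 * t ^ 2) / 2))
        - 7 * ∫ t in (0 : ℝ)..a, exp (-t ^ 2 / 2) := by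
    unfold quadDHalfIntegrand
    rw [intervalIntegral.integral_sub, intervalIntegral.integral_add,
      intervalIntegral.integral_const_mul, intervalIntegral.integral_const_mul,
      intervalIntegral.integral_const_mul]
    all_goals apply Continuous.intervalIntegrable; fun_prop
  simp only [quadD, stdGaussianCDF_mul_sqrt a two_pos, stdGaussianCDF_mul_sqrt a three_pos, hint]
  linear_combination 7 * hq₁

lemma quadDHalfIntegrand_nonpos {t : ℝ} (ht : 0.64 ≤ t) : quadDHalfIntegrand t ≤ 0 := by
  set v := exp (-t ^ 2 / 2) with hv
  have hv₀ : 0 < v := exp_pos _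
  have hv₁ : v ≤ 0.8149 :=
    calc v ≤ exp (-0.2048) := exp_le_exp.2 (by nlinarith)
      _ ≤ 0.8149 := by
          have := exp_neg_le_of_le_one (y := 0.2048) (by norm_num) (by norm_num)
          norm_num at this ⊢; linarith
  have hv₂ : exp (-(2 * t ^ 2) / 2) = v ^ 2 := by rw [hv, ← exp_nat_mul]; ring_nf
  have hv₃ : exp (-(3 * t ^ 2) / 2) = v ^ 3 := by rw [hv, ← exp_nat_mul]; ring_nf
  have hfactor : 3 * √2 * v + 3 * √3 * v ^ 2 - 7 ≤ 0 := by
    have h2 : √2 * v ≤ 1.4142136 * 0.8149 := mul_le_mul sqrt_two_le_d7 hv₁ hv₀.le (by norm_num)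
    have h3 : √3 * v ^ 2 ≤ 1.7320509 * 0.8149 ^ 2 :=
      mul_le_mul sqrt_three_le_d7 (pow_le_pow_left₀ hv₀.le hv₁ 2) (by positivity) (by norm_num)
    nlinarith
  have := mul_nonpos_of_nonneg_of_nonpos hv₀.le hfactor
  unfold quadDHalfIntegrand
  rw [← hv, hv₂, hv₃]
  linarith

-- Sum of the truncated series bounds for the three exponentials in `t²`, with `3√2 ≤ 4.24265`
-- and `3√3 ≤ 5.19616`.
noncomputable def quadDHalfMajorant (t : ℝ) : ℝ :=
  243881 / 100000 - 853689 / 100000 * t ^ 2 + 1418401 / 200000 * t ^ 4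
    - 696823 / 200000 * t ^ 6 + 3054821 / 2400000 * t ^ 8

lemma quadDHalfIntegrand_le_majorant {t : ℝ} (h0 : 0 ≤ t) (h1 : t ≤ 0.64) :
    quadDHalfIntegrand t ≤ quadDHalfMajorant t := by
  have hx₀ : 0 ≤ t ^ 2 := sq_nonneg t
  have hx₁ : t ^ 2 ≤ 0.4096 := by nlinarith
  have e₂ := exp_neg_le_of_le_one hx₀ (by linarith)
  have e₃ := exp_neg_le_of_le_one (y := 3 * t ^ 2 / 2) (by positivity) (by linarith)
  have e₁ := le_exp_neg_of_le_one (y := t ^ 2 / 2) (by positivity) (by linarith)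
  have h₂ := mul_le_mul (by linarith [sqrt_two_le_d7] : 3 * √2 ≤ 4.24265) e₂ (exp_pos _).le
    (by norm_num)
  have h₃ := mul_le_mul (by linarith [sqrt_three_le_d7] : 3 * √3 ≤ 5.19616) e₃ (exp_pos _).le
    (by norm_num)
  unfold quadDHalfIntegrand quadDHalfMajorant
  rw [show -(2 * t ^ 2) / 2 = -t ^ 2 by ring, show -(3 * t ^ 2) / 2 = -(3 * t ^ 2 / 2) by ring,
    neg_div]
  linarith

lemma integral_quadDHalfMajorant (b : ℝ) :
    ∫ t in (0 : ℝ)..b, quadDHalfMajorant t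
      = 243881 / 100000 * b - 284563 / 100000 * b ^ 3 + 1418401 / 1000000 * b ^ 5
        - 696823 / 1400000 * b ^ 7 + 3054821 / 21600000 * b ^ 9 := by
  unfold quadDHalfMajorant
  rw [intervalIntegral.integral_add, intervalIntegral.integral_sub, intervalIntegral.integral_add,
    intervalIntegral.integral_sub]
  · simp only [intervalIntegral.integral_const_mul, integral_pow, intervalIntegral.integral_const]
    ring
  all_goals apply Continuous.intervalIntegrable; fun_prop

lemma integral_quadDHalfMajorant_le {b : ℝ} (h0 : 0 ≤ b) (h1 : b ≤ 0.64) :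
    ∫ t in (0 : ℝ)..b, quadDHalfMajorant t ≤ 0.9525 := by
  rw [integral_quadDHalfMajorant]
  -- the maximum, about `0.9483`, is attained near `b = 0.626`
  have hb : 0 ≤ 0.64 - b := by linarith
  nlinarith [sq_nonneg (b - 0.626), mul_nonneg h0 (sq_nonneg (b - 0.626)),
    mul_nonneg (mul_nonneg h0 hb) (sq_nonneg (b - 0.626)),
    mul_nonneg hb (sq_nonneg (b * (b - 0.626))),
    sq_nonneg (b ^ 2 * (b - 0.626)), mul_nonneg h0 (sq_nonneg (b ^ 2 * (b - 0.626))),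
    mul_nonneg (mul_nonneg h0 hb) (sq_nonneg (b ^ 2 * (b - 0.626))),
    mul_nonneg hb (sq_nonneg (b ^ 3 * (b - 0.626)))]

lemma integral_quadDHalfIntegrand_le {b : ℝ} (hb : 0 ≤ b) :
    ∫ t in (0 : ℝ)..b, quadDHalfIntegrand t ≤ 0.9525 := by
  have hint (x y : ℝ) : IntervalIntegrable quadDHalfIntegrand volume x y :=
    continuous_quadDHalfIntegrand.intervalIntegrable x y
  have hsmall {c : ℝ} (h0 : 0 ≤ c) (h1 : c ≤ 0.64) :
      ∫ t in (0 : ℝ)..c, quadDHalfIntegrand t ≤ 0.9525 := by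
    have := intervalIntegral.integral_mono_on h0 (hint 0 c)
      ((by unfold quadDHalfMajorant; fun_prop : Continuous quadDHalfMajorant).intervalIntegrable
        0 c)
      fun t ht ↦ quadDHalfIntegrand_le_majorant ht.1 (ht.2.trans h1)
    linarith [integral_quadDHalfMajorant_le h0 h1]
  rcases le_or_gt b 0.64 with h | h
  · exact hsmall hb h
  · have htail : ∫ t in (0.64 : ℝ)..b, quadDHalfIntegrand t ≤ 0 := by
      simpa using intervalIntegral.integral_mono_on h.le (hint _ _) intervalIntegrable_const
        fun t ht ↦ quadDHalfIntegrand_nonpos ht.1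
    rw [← intervalIntegral.integral_add_adjacent_intervals (hint 0 0.64) (hint 0.64 b)]
    linarith [hsmall (by norm_num) le_rfl]

lemma quadD_half_ge_d2 {a : ℝ} (ha : 0 ≤ a) : 0.03 ≤ quadD a (1 / 2) := by
  have hK : 0 ≤ (√(2 * π))⁻¹ := by positivity
  have h₁ := mul_le_mul_of_nonneg_left (integral_quadDHalfIntegrand_le ha) hK
  have h₂ := mul_le_mul_of_nonneg_right inv_sqrt_two_pi_le_d5 (by norm_num : (0 : ℝ) ≤ 0.9525)
  linarith [quadD_half_eq a]

theorem stmt14 (a : ℝ) (ha : 0 < a) (τ : ℝ) (hτ : τ ∈ Set.Icc (0 : ℝ) (1 / 2)) :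
    (1 - 2 * τ) * quadD a 0 + 2 * τ * quadD a (1 / 2) ≤ quadD a τ
      ∧ 0.5 - 0.94 * τ ≤ quadD a τ := by
  obtain ⟨hτ₀, hτ₁⟩ := hτ
  have hchord := chord_le_of_quadratic (f := quadD a) (fun _ ↦ rfl)
    (quadD_leadingCoeff_nonpos ha.le) hτ₀ hτ₁
  refine ⟨hchord, ?_⟩
  linarith [mul_le_mul_of_nonneg_left (half_le_quadD_zero ha.le) (by linarith : 0 ≤ 1 - 2 * τ),
    mul_le_mul_of_nonneg_left (quadD_half_ge_d2 ha.le) (by linarith : 0 ≤ 2 * τ)]
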